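/- Let n = 6 and define j₀ = 1 and j_i = 3 for all nonzero i ∈ ℤ/(6). Let X = (ℤ/(6))² and define r : X × X → X × X by r((i,j),(k,l)) = (σ_{(i,j)}(k,l), σ_{σ_{(i,j)}(k,l)}⁻¹(i,j)), where σ_{(i,j)}(k,l) = (k + j, l − j_{k+j−i}) (so σ_{(i,j)}(k,l) = (k+j, l − 3 + 2δ_{k+j−i,0})). Then (X,r) is an indecomposable and irretractable solution of the YBE, but (X,r) is not simple: there is a surjective homomorphism of solutions from (X,r) onto a solution of cardinality 2. -/

import Mathlib

open Function

/-- The map `r₁₂ = r × id` on `X³`. -/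
def yb12 {X : Type*} (r : X × X → X × X) : X × X × X → X × X × X :=
  fun p => ((r (p.1, p.2.1)).1, ((r (p.1, p.2.1)).2, p.2.2))

/-- The map `r₂₃ = id × r` on `X³`. -/
def yb23 {X : Type*} (r : X × X → X × X) : X × X × X → X × X × X :=
  fun p => (p.1, r p.2)

/-- `(X, r)` is an involutive non-degenerate set-theoretic solution of the
Yang–Baxter equation. -/
structure IsYBSolution {X : Type*} (r : X × X → X × X) : Prop where
  invol : ∀ p, r (r p) = p
  sigma_bij : ∀ x, Function.Bijective (fun y => (r (x, y)).1)
  gamma_bij : ∀ y, Function.Bijective (fun x => (r (x, y)).2)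
  braid : yb12 r ∘ yb23 r ∘ yb12 r = yb23 r ∘ yb12 r ∘ yb23 r

/-- A homomorphism of solutions: `f (σ_x y) = σ'_{f x} (f y)`. -/
def IsSolHom {X Y : Type*} (r : X × X → X × X) (s : Y × Y → Y × Y) (f : X → Y) : Prop :=
  ∀ x y, f (r (x, y)).1 = (s (f x, f y)).1

/-- The permutation group `G(X,r)`: the subgroup of `Sym(X)` generated by the
permutations `σ_x`. -/
def permGroup {X : Type*} (r : X × X → X × X) : Subgroup (Equiv.Perm X) :=
  Subgroup.closure {g : Equiv.Perm X | ∃ x, ∀ y, g y = (r (x, y)).1}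

/-- `(X,r)` is indecomposable: `G(X,r)` acts transitively on `X`. -/
def IsIndecomposable {X : Type*} (r : X × X → X × X) : Prop :=
  ∀ x y : X, ∃ g ∈ permGroup r, g x = y

/-- `(X,r)` is irretractable: `σ_x = σ_y` implies `x = y`. -/
def IsIrretractable {X : Type*} (r : X × X → X × X) : Prop :=
  ∀ x y : X, (∀ z, (r (x, z)).1 = (r (y, z)).1) → x = y

/-- `(X,r)` is a simple solution: `|X| > 1` and every surjective homomorphism of
solutions from `(X,r)` is either bijective or has a one-element target. -/
def IsSimpleSolution {X : Type u} (r : X × X → X × X) : Prop :=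
  Nontrivial X ∧ ∀ (Y : Type u) (s : Y × Y → Y × Y), IsYBSolution s →
    ∀ f : X → Y, Function.Surjective f → IsSolHom r s f →
      Function.Bijective f ∨ Subsingleton Y

/-!
Everything is a consequence of the shape of `σ_{(i,j)}(k,l) = (k + j, l - J (k + j - i))`, which
makes sense for any function `J` on an abelian group `A`. For even `J` the resulting `r` is
involutive, and the braid relation holds as a formal identity in the values of `J`. Since
`σ_{(k+t-d, t)}(k,l) = (k + t, l - J d)`, the orbits of `G(X,r)` are as large as the subgroup
generated by the values of `J` allows; `σ_x = σ_y` forces `x - y` to be `(a period of J, 0)`.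
Finally, if a homomorphism `φ` sends every value of `J` to the same `c`, then `(k,l) ↦ φ l`
is a homomorphism onto the permutation solution `(a,b) ↦ (b - c, a + c)`; for `n = 6` all the
`j_i` are odd, so reduction mod `2` gives a quotient of size `2`.
-/

section PermutationSolution

variable {Y : Type*}

def permSolution (f : Equiv.Perm Y) (p : Y × Y) : Y × Y := (f p.2, f.symm p.1)

theorem isYBSolution_permSolution (f : Equiv.Perm Y) : IsYBSolution (permSolution f) where
  invol p := by simp [permSolution]
  sigma_bij _ := f.bijective
  gamma_bij _ := f.symm.bijective
  braid := by
    funext p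
    simp [permSolution, yb12, yb23]

end PermutationSolution

theorem not_isSimpleSolution_of_surjective {X Y : Type u} {r : X × X → X × X}
    {s : Y × Y → Y × Y} [Nontrivial Y] (hs : IsYBSolution s) {f : X → Y}
    (hf : Surjective f) (hfr : IsSolHom r s f) (hcard : Nat.card Y < Nat.card X) :
    ¬ IsSimpleSolution r := by
  rintro ⟨-, hsimple⟩
  rcases hsimple Y s hs f hf hfr with hbij | hsub
  · exact hcard.ne' (Nat.card_eq_of_bijective f hbij)
  · exact not_subsingleton Y hsub

section SolJ

open MulAction

variable {A : Type*} [AddCommGroup A] (J : A → A)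

def sigmaJ (x : A × A) : Equiv.Perm (A × A) where
  toFun y := (y.1 + x.2, y.2 - J (y.1 + x.2 - x.1))
  invFun y := (y.1 - x.2, y.2 + J (y.1 - x.1))
  left_inv y := by simp
  right_inv y := by simp

theorem sigmaJ_apply (i j k l : A) : sigmaJ J (i, j) (k, l) = (k + j, l - J (k + j - i)) := rfl

theorem sigmaJ_symm_apply (i j k l : A) :
    (sigmaJ J (i, j)).symm (k, l) = (k - j, l + J (k - i)) := rfl

def solJ (p : (A × A) × (A × A)) : (A × A) × (A × A) :=
  (sigmaJ J p.1 p.2, (sigmaJ J (sigmaJ J p.1 p.2)).symm p.1)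

theorem eq_solJ {r : (A × A) × (A × A) → (A × A) × (A × A)}
    (hr : ∀ x y, (r (x, y)).1 = sigmaJ J x y ∧ sigmaJ J (sigmaJ J x y) (r (x, y)).2 = x) :
    r = solJ J := by
  funext ⟨x, y⟩
  exact Prod.ext (hr x y).1 ((Equiv.eq_symm_apply _).2 (hr x y).2)

variable {J}

theorem solJ_apply (hJ : J.Even) (i j k l : A) :
    solJ J ((i, j), (k, l)) =
      ((k + j, l - J (k + j - i)), (i - l + J (k + j - i), j + J (k + j - i))) := by
  have hD : i - (k + j) = -(k + j - i) := (neg_sub _ _).symm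
  rw [solJ, sigmaJ_apply, sigmaJ_symm_apply, hD, hJ, sub_sub_eq_add_sub, add_sub_right_comm i]

theorem solJ_solJ (hJ : J.Even) (p : (A × A) × (A × A)) : solJ J (solJ J p) = p := by
  obtain ⟨⟨i, j⟩, ⟨k, l⟩⟩ := p
  have hD : i - l + J (k + j - i) + (l - J (k + j - i)) - (k + j) = -(k + j - i) := by abel
  simp only [solJ_apply hJ, hD, hJ _]
  ext <;> abel_nf

theorem solJ_braid (hJ : J.Even) :
    yb12 (solJ J) ∘ yb23 (solJ J) ∘ yb12 (solJ J) =
      yb23 (solJ J) ∘ yb12 (solJ J) ∘ yb23 (solJ J) := by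
  funext ⟨⟨i, j⟩, ⟨k, l⟩, ⟨m, n⟩⟩
  simp only [comp_apply, yb12, yb23, solJ_apply hJ]
  abel_nf

theorem bijective_solJ_snd (hJ : J.Even) (y : A × A) :
    Bijective fun x => (solJ J (x, y)).2 := by
  obtain ⟨k, l⟩ := y
  -- the argument `k + j - i` of `J` can be read off the output `(a, b)` as `k + b - a - l`
  let inv : A × A → A × A := fun ⟨a, b⟩ => (a + l - J (k + b - a - l), b - J (k + b - a - l))
  refine bijective_iff_has_inverse.2 ⟨inv, fun ⟨i, j⟩ => ?_, fun ⟨a, b⟩ => ?_⟩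
  · have hD : k + (j + J (k + j - i)) - (i - l + J (k + j - i)) - l = k + j - i := by abel
    simp only [solJ_apply hJ, inv, hD]
    ext <;> abel_nf
  · have hD : k + (b - J (k + b - a - l)) - (a + l - J (k + b - a - l)) = k + b - a - l := by
      abel
    simp only [solJ_apply hJ, inv, hD]
    ext <;> abel_nf

theorem isYBSolution_solJ (hJ : J.Even) : IsYBSolution (solJ J) where
  invol := solJ_solJ hJ
  sigma_bij x := (sigmaJ J x).bijective
  gamma_bij := bijective_solJ_snd hJ
  braid := solJ_braid hJ

theorem isIrretractable_solJ (hJ : ∀ p, Periodic J p → p = 0) : IsIrretractable (solJ J) := by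
  rintro ⟨i, j⟩ ⟨i', j'⟩ h
  have hσ : ∀ k l, sigmaJ J (i, j) (k, l) = sigmaJ J (i', j') (k, l) := fun k l => h (k, l)
  simp only [sigmaJ_apply, Prod.mk.injEq, sub_right_inj] at hσ
  obtain rfl : j = j' := add_left_cancel (hσ 0 0).1
  have hper : Periodic J (i - i') := fun u => by
    have h := (hσ (u - j + i) 0).2
    rwa [show u - j + i + j - i = u by abel, show u - j + i + j - i' = u + (i - i') by abel,
      eq_comm] at h
  rw [sub_eq_zero.1 (hJ _ hper)]

theorem sigmaJ_mem_permGroup (x : A × A) : sigmaJ J x ∈ permGroup (solJ J) :=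
  Subgroup.subset_closure ⟨x, fun _ => rfl⟩

variable (J) in
theorem mem_orbit_sigmaJ_self (t d k l : A) :
    (k + t, l - J d) ∈ orbit (permGroup (solJ J)) (k, l) := by
  refine ⟨⟨_, sigmaJ_mem_permGroup (k + t - d, t)⟩, ?_⟩
  simp [sigmaJ_apply, Subgroup.smul_def]

theorem mem_orbit_add_of_mem_closure {a : A} (ha : a ∈ AddSubgroup.closure (Set.range J))
    (k l : A) : (k, l + a) ∈ orbit (permGroup (solJ J)) (k, l) := by
  induction ha using AddSubgroup.closure_induction generalizing l with
  | mem _ hd =>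
    obtain ⟨d, rfl⟩ := hd
    simpa [mem_orbit_symm] using mem_orbit_sigmaJ_self J 0 d k (l + J d)
  | zero => simp
  | add a b _ _ iha ihb =>
    rw [← add_assoc]
    exact orbit_eq_iff.2 (iha l) ▸ ihb (l + a)
  | neg a _ iha => simpa [mem_orbit_symm, sub_eq_add_neg] using iha (l - a)

theorem isIndecomposable_solJ (hJ : AddSubgroup.closure (Set.range J) = ⊤) :
    IsIndecomposable (solJ J) := by
  rintro ⟨k, l⟩ ⟨k', l'⟩
  have hstep := mem_orbit_sigmaJ_self J (k' - k) 0 k l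
  have hshift := mem_orbit_add_of_mem_closure (hJ ▸ AddSubgroup.mem_top (l' - (l - J 0))) k'
    (l - J 0)
  obtain ⟨⟨g, hg⟩, hgx⟩ := orbit_eq_iff.2 (by simpa using hstep) ▸ hshift
  exact ⟨g, hg, by simpa using hgx⟩

theorem isSolHom_solJ_permSolution {B : Type*} [AddCommGroup B] (φ : A →+ B) (c : B)
    (hφ : ∀ u, φ (J u) = c) :
    IsSolHom (solJ J) (permSolution (Equiv.addRight (-c))) fun x => φ x.2 := by
  rintro ⟨i, j⟩ ⟨k, l⟩
  simp [solJ, sigmaJ_apply, permSolution, hφ, sub_eq_add_neg]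

end SolJ

/-- Remark `exnonsimple`: for `n = 6`, `j₀ = 1` and `j_i = 3` for
`i ≠ 0`, the resulting solution on `(ℤ/(6))²` is indecomposable and
irretractable but not simple: it maps onto a solution of cardinality `2`. -/
theorem indecomposable_irretractable_not_simple_card36
    (J : ZMod 6 → ZMod 6)
    (hJ : ∀ i : ZMod 6, J i = if i = 0 then 1 else 3)
    (σ : ZMod 6 × ZMod 6 → ZMod 6 × ZMod 6 → ZMod 6 × ZMod 6)
    (hσ : ∀ i j k l : ZMod 6, σ (i, j) (k, l) = (k + j, l - J (k + j - i)))
    (r : (ZMod 6 × ZMod 6) × (ZMod 6 × ZMod 6) → (ZMod 6 × ZMod 6) × (ZMod 6 × ZMod 6))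
    (hr : ∀ x y : ZMod 6 × ZMod 6,
      (r (x, y)).1 = σ x y ∧ σ (σ x y) ((r (x, y)).2) = x) :
    IsYBSolution r ∧ IsIndecomposable r ∧ IsIrretractable r ∧
    ¬ IsSimpleSolution r ∧
    ∃ (Y : Type) (s : Y × Y → Y × Y), IsYBSolution s ∧ Nat.card Y = 2 ∧
      ∃ f : ZMod 6 × ZMod 6 → Y, Function.Surjective f ∧ IsSolHom r s f := by
  obtain rfl : σ = fun x => ⇑(sigmaJ J x) := by
    funext ⟨i, j⟩ ⟨k, l⟩
    exact hσ i j k l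
  obtain rfl := eq_solJ J hr
  have hJ0 : J 0 = 1 := by simp [hJ]
  have hJeven : J.Even := fun u => by simp [hJ, neg_eq_zero]
  have hJ1 : ∀ u, J u = 1 → u = 0 := by simp only [hJ]; decide
  have hgen : AddSubgroup.closure (Set.range J) = ⊤ := by
    have h1 : (1 : ZMod 6) ∈ AddSubgroup.closure (Set.range J) :=
      AddSubgroup.subset_closure ⟨0, hJ0⟩
    exact (AddSubgroup.eq_top_iff' _).2 fun a => by simpa using AddSubgroup.nsmul_mem _ h1 a.val
  have h26 : 2 ∣ 6 := by norm_num
  let φ : ZMod 6 →+ ZMod 2 := (ZMod.castHom h26 (ZMod 2)).toAddMonoidHom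
  have hφ : ∀ u, φ (J u) = 1 := fun u => by rw [hJ]; split_ifs <;> rfl
  have hs := isYBSolution_permSolution (Equiv.addRight (-1 : ZMod 2))
  have hf := isSolHom_solJ_permSolution φ 1 hφ
  have hsurj : Surjective fun x : ZMod 6 × ZMod 6 => φ x.2 :=
    (ZMod.castHom_surjective h26).comp Prod.snd_surjective
  exact ⟨isYBSolution_solJ hJeven, isIndecomposable_solJ hgen,
    isIrretractable_solJ fun p hp => hJ1 p ((zero_add p ▸ hp 0).trans hJ0),
    not_isSimpleSolution_of_surjective hs hsurj hf (by simp),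
    ZMod 2, _, hs, by simp, _, hsurj, hf⟩
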